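/- arXiv:1310.7526 — 2 statements merged into one kernel-verified Lean document; each statement's English description precedes it below -/
import Mathlib

section
/- Let B, B' ∈ B_n. Then the matrices Φ^L satisfy the chain rule Φ_{BB'}^L = φ_B(Φ_{B'}^L)·Φ_B^L, and the matrices Φ^R satisfy Φ_{BB'}^R = Φ_B^R·φ_B(Φ_{B'}^R). Consequently, φ_B(Φ_{B^{-1}}^L) is a two-sided inverse of Φ_B^L, and φ_B(Φ_{B^{-1}}^R) is a two-sided inverse of Φ_B^R. -/
/-- Index set for the generators `a i j`, `i ≠ j`, of the free algebra `A_N`. -/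
abbrev BraidAlgGen (n : ℕ) := {p : Fin n × Fin n // p.1 ≠ p.2}

/-- The free noncommutative unital `ℤ`-algebra on generators `a i j`, `i ≠ j`. -/
abbrev BraidAlg (n : ℕ) := FreeAlgebra ℤ (BraidAlgGen n)

/-- The generator `a i j` (for `i ≠ j`). -/
noncomputable def agen {n : ℕ} (i j : Fin n) (h : i ≠ j) : BraidAlg n :=
  FreeAlgebra.ι ℤ ⟨(i, j), h⟩

/-- Values of `φ_{σ_k}` on generators (`k1` plays the role of `k+1`). -/
noncomputable def phiSigmaAux {n : ℕ} (k k1 : Fin n) (hk : k ≠ k1)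
    (p : BraidAlgGen n) : BraidAlg n :=
  if h1 : p.1.1 = k ∧ p.1.2 = k1 then -agen k1 k hk.symm
  else if h2 : p.1.1 = k1 ∧ p.1.2 = k then -agen k k1 hk
  else if h3 : p.1.1 = k then
    agen k1 p.1.2 (fun he => h1 ⟨h3, he.symm⟩) -
      agen k1 k hk.symm * agen k p.1.2 (fun he => p.2 (h3.trans he))
  else if h4 : p.1.2 = k then
    agen p.1.1 k1 (fun he => h2 ⟨he, h4⟩) -
      agen p.1.1 k (fun he => p.2 (he.trans h4.symm)) * agen k k1 hk
  else if h5 : p.1.1 = k1 then agen k p.1.2 (fun he => h2 ⟨h5, he.symm⟩)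
  else if h6 : p.1.2 = k1 then agen p.1.1 k (fun he => h1 ⟨he, h6⟩)
  else FreeAlgebra.ι ℤ p

/-- The algebra endomorphism `φ_{σ_k}` of `A_N`. -/
noncomputable def phiSigma {n : ℕ} (k k1 : Fin n) (hk : k ≠ k1) :
    BraidAlg n →ₐ[ℤ] BraidAlg n :=
  FreeAlgebra.lift ℤ (phiSigmaAux k k1 hk)

/-- Values of `φ_{σ_k⁻¹}` on generators. -/
noncomputable def phiSigmaInvAux {n : ℕ} (k k1 : Fin n) (hk : k ≠ k1)
    (p : BraidAlgGen n) : BraidAlg n :=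
  if h1 : p.1.1 = k ∧ p.1.2 = k1 then -agen k1 k hk.symm
  else if h2 : p.1.1 = k1 ∧ p.1.2 = k then -agen k k1 hk
  else if h3 : p.1.1 = k then agen k1 p.1.2 (fun he => h1 ⟨h3, he.symm⟩)
  else if h4 : p.1.2 = k then agen p.1.1 k1 (fun he => h2 ⟨he, h4⟩)
  else if h5 : p.1.1 = k1 then
    agen k p.1.2 (fun he => h2 ⟨h5, he.symm⟩) -
      agen k k1 hk * agen k1 p.1.2 (fun he => p.2 (h5.trans he))
  else if h6 : p.1.2 = k1 then
    agen p.1.1 k (fun he => h1 ⟨he, h6⟩) -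
      agen p.1.1 k1 (fun he => p.2 (he.trans h6.symm)) * agen k1 k hk.symm
  else FreeAlgebra.ι ℤ p

/-- The algebra endomorphism `φ_{σ_k⁻¹}` of `A_N`. -/
noncomputable def phiSigmaInv {n : ℕ} (k k1 : Fin n) (hk : k ≠ k1) :
    BraidAlg n →ₐ[ℤ] BraidAlg n :=
  FreeAlgebra.lift ℤ (phiSigmaInvAux k k1 hk)

/- We realize the braid group `B_{n+1}` (included in `B_{n+2}` so that the last
strand does not interact) by words in the standard generators `σ_k` and their
inverses: a letter is a pair `(k, s)` with `k : Fin n` (the generator `σ_{k+1}`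
crossing strands `k` and `k+1` of `Fin (n+2)`, never the extra last strand) and
`s : Bool` recording the sign of the crossing. -/

/-- The automorphism `φ` associated to a single braid-word letter. -/
noncomputable def phiLetter {n : ℕ} (g : Fin n × Bool) :
    BraidAlg (n + 2) →ₐ[ℤ] BraidAlg (n + 2) :=
  let k : Fin (n + 2) := ⟨g.1, by omega⟩
  let k1 : Fin (n + 2) := ⟨g.1 + 1, by omega⟩
  have hk : k ≠ k1 := Fin.ne_of_val_ne (Nat.lt_succ_self _).ne
  if g.2 then phiSigma k k1 hk else phiSigmaInv k k1 hk

/-- The homomorphism `φ_B` for a braid word `B` (so `φ_{BB'} = φ_B ∘ φ_{B'}`). -/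
noncomputable def phiWord {n : ℕ} : List (Fin n × Bool) →
    (BraidAlg (n + 2) →ₐ[ℤ] BraidAlg (n + 2))
  | [] => AlgHom.id ℤ _
  | g :: w => (phiLetter g).comp (phiWord w)

/-- The inverse braid word. -/
def wordInv {n : ℕ} (w : List (Fin n × Bool)) : List (Fin n × Bool) :=
  (w.map (fun g => (g.1, !g.2))).reverse

/-- The generator `a_{i,n+1}` involving the extra strand. -/
noncomputable def aL {n : ℕ} (i : Fin (n + 1)) : BraidAlg (n + 2) :=
  agen i.castSucc (Fin.last (n + 1)) (Fin.castSucc_lt_last i).ne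

/-- The generator `a_{n+1,i}` involving the extra strand. -/
noncomputable def aR {n : ℕ} (i : Fin (n + 1)) : BraidAlg (n + 2) :=
  agen (Fin.last (n + 1)) i.castSucc (Fin.castSucc_lt_last i).ne'

/-- `L` is the matrix `Φ_B^L` of the braid word `w`:
`φ_B(a_{i,n+1}) = Σ_j L_{ij} a_{j,n+1}`. -/
def IsPhiL {n : ℕ} (w : List (Fin n × Bool))
    (L : Matrix (Fin (n + 1)) (Fin (n + 1)) (BraidAlg (n + 2))) : Prop :=
  ∀ i, phiWord w (aL i) = ∑ j, L i j * aL j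

/-- `R` is the matrix `Φ_B^R` of the braid word `w`:
`φ_B(a_{n+1,i}) = Σ_j a_{n+1,j} R_{ji}`. -/
def IsPhiR {n : ℕ} (w : List (Fin n × Bool))
    (R : Matrix (Fin (n + 1)) (Fin (n + 1)) (BraidAlg (n + 2))) : Prop :=
  ∀ i, phiWord w (aR i) = ∑ j, aR j * R j i



open FreeAlgebra MonoidAlgebra

variable {X : Type*} [DecidableEq X]

noncomputable def piL (y : X) :
    MonoidAlgebra ℤ (FreeMonoid X) →ₗ[ℤ] MonoidAlgebra ℤ (FreeMonoid X) :=
  Finsupp.lsum ℤ (fun (m : FreeMonoid X) => LinearMap.toSpanSingleton ℤ _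
    (if m.toList.getLast? = some y then
      MonoidAlgebra.single (FreeMonoid.ofList m.toList.dropLast) (1:ℤ) else 0)) ∘ₗ
    (MonoidAlgebra.coeffLinearEquiv ℤ).toLinearMap

lemma piL_mul (y z : X) (c : MonoidAlgebra ℤ (FreeMonoid X)) :
    piL y (c * MonoidAlgebra.single (FreeMonoid.of z) 1) =
      if z = y then c else 0 := by
  induction c using MonoidAlgebra.induction_linear with
  | zero => simp
  | add f g hf hg =>
      rw [add_mul, map_add, hf, hg]; split <;> simp
  | single m r =>
      rw [MonoidAlgebra.single_mul_single, mul_one]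
      rw [piL, LinearMap.comp_apply]
      erw [Finsupp.lsum_single]
      rw [LinearMap.toSpanSingleton_apply]
      have h1 : (m * FreeMonoid.of z).toList = m.toList ++ [z] := rfl
      rw [h1]
      simp only [List.getLast?_concat, List.dropLast_concat, Option.some.injEq]
      split <;> simp [FreeMonoid.ofList_toList, MonoidAlgebra.smul_single]

lemma ealg_ι (x : X) : (equivMonoidAlgebraFreeMonoid (R := ℤ) (X := X)) (FreeAlgebra.ι ℤ x)
    = MonoidAlgebra.single (FreeMonoid.of x) 1 := by
  simp [equivMonoidAlgebraFreeMonoid, MonoidAlgebra.of_apply]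

lemma coeff_unique_left {T : Type*} [Fintype T] [DecidableEq T] (x : T → X)
    (hx : Function.Injective x) (c d : T → FreeAlgebra ℤ X)
    (h : ∑ j, c j * FreeAlgebra.ι ℤ (x j) = ∑ j, d j * FreeAlgebra.ι ℤ (x j)) :
    c = d := by
  funext k
  have e := equivMonoidAlgebraFreeMonoid (R := ℤ) (X := X)
  have h2 := congrArg (equivMonoidAlgebraFreeMonoid (R := ℤ) (X := X)) h
  simp only [map_sum, map_mul, ealg_ι] at h2
  have h3 := congrArg (piL (x k)) h2
  simp only [map_sum, piL_mul, hx.eq_iff] at h3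
  simp only [Finset.sum_ite_eq', Finset.mem_univ, if_true] at h3
  exact equivMonoidAlgebraFreeMonoid.injective h3

noncomputable def piR (y : X) :
    MonoidAlgebra ℤ (FreeMonoid X) →ₗ[ℤ] MonoidAlgebra ℤ (FreeMonoid X) :=
  Finsupp.lsum ℤ (fun (m : FreeMonoid X) => LinearMap.toSpanSingleton ℤ _
    (if m.toList.head? = some y then
      MonoidAlgebra.single (FreeMonoid.ofList m.toList.tail) (1:ℤ) else 0)) ∘ₗ
    (MonoidAlgebra.coeffLinearEquiv ℤ).toLinearMap

lemma piR_mul (y z : X) (c : MonoidAlgebra ℤ (FreeMonoid X)) :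
    piR y (MonoidAlgebra.single (FreeMonoid.of z) 1 * c) =
      if z = y then c else 0 := by
  induction c using MonoidAlgebra.induction_linear with
  | zero => simp
  | add f g hf hg =>
      rw [mul_add, map_add, hf, hg]; split <;> simp
  | single m r =>
      rw [MonoidAlgebra.single_mul_single, one_mul]
      rw [piR, LinearMap.comp_apply]
      erw [Finsupp.lsum_single]
      rw [LinearMap.toSpanSingleton_apply]
      have h1 : (FreeMonoid.of z * m).toList = z :: m.toList := rfl
      rw [h1]
      simp only [List.head?_cons, List.tail_cons, Option.some.injEq]
      split <;> simp [FreeMonoid.ofList_toList, MonoidAlgebra.smul_single]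

lemma coeff_unique_right {T : Type*} [Fintype T] [DecidableEq T] (x : T → X)
    (hx : Function.Injective x) (c d : T → FreeAlgebra ℤ X)
    (h : ∑ j, FreeAlgebra.ι ℤ (x j) * c j = ∑ j, FreeAlgebra.ι ℤ (x j) * d j) :
    c = d := by
  funext k
  have h2 := congrArg (equivMonoidAlgebraFreeMonoid (R := ℤ) (X := X)) h
  simp only [map_sum, map_mul, ealg_ι] at h2
  have h3 := congrArg (piR (x k)) h2
  simp only [map_sum, piR_mul, hx.eq_iff] at h3
  simp only [Finset.sum_ite_eq', Finset.mem_univ, if_true] at h3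
  exact equivMonoidAlgebraFreeMonoid.injective h3

lemma phiSigma_agen {n : ℕ} (k k1 : Fin n) (hk : k ≠ k1) (i j : Fin n) (h : i ≠ j) :
    phiSigma k k1 hk (agen i j h) = phiSigmaAux k k1 hk ⟨(i,j),h⟩ := by
  simp [phiSigma, agen, FreeAlgebra.lift_ι_apply]

lemma phiSigmaInv_agen {n : ℕ} (k k1 : Fin n) (hk : k ≠ k1) (i j : Fin n) (h : i ≠ j) :
    phiSigmaInv k k1 hk (agen i j h) = phiSigmaInvAux k k1 hk ⟨(i,j),h⟩ := by
  simp [phiSigmaInv, agen, FreeAlgebra.lift_ι_apply]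

section eval
variable {n : ℕ} (k k1 : Fin n) (hk : k ≠ k1)

lemma s1 : phiSigma k k1 hk (agen k k1 hk) = -agen k1 k hk.symm := by
  rw [phiSigma_agen, phiSigmaAux]; simp

lemma s2 : phiSigma k k1 hk (agen k1 k hk.symm) = -agen k k1 hk := by
  rw [phiSigma_agen, phiSigmaAux]; simp [hk]

lemma s3 (j : Fin n) (hj : j ≠ k) (hj1 : j ≠ k1) :
    phiSigma k k1 hk (agen k j hj.symm) =
      agen k1 j hj1.symm - agen k1 k hk.symm * agen k j hj.symm := by
  rw [phiSigma_agen, phiSigmaAux]; simp [hk, hk.symm, hj, hj1]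

lemma s4 (i : Fin n) (hi : i ≠ k) (hi1 : i ≠ k1) :
    phiSigma k k1 hk (agen i k hi) =
      agen i k1 hi1 - agen i k hi * agen k k1 hk := by
  rw [phiSigma_agen, phiSigmaAux]; simp [hk, hk.symm, hi, hi1]

lemma s5 (j : Fin n) (hj : j ≠ k) (hj1 : j ≠ k1) :
    phiSigma k k1 hk (agen k1 j hj1.symm) = agen k j hj.symm := by
  rw [phiSigma_agen, phiSigmaAux]; simp [hk, hk.symm, hj, hj1]

lemma s6 (i : Fin n) (hi : i ≠ k) (hi1 : i ≠ k1) :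
    phiSigma k k1 hk (agen i k1 hi1) = agen i k hi := by
  rw [phiSigma_agen, phiSigmaAux]; simp [hk, hk.symm, hi, hi1]

lemma s7 (i j : Fin n) (h : i ≠ j) (hi : i ≠ k) (hi1 : i ≠ k1) (hj : j ≠ k) (hj1 : j ≠ k1) :
    phiSigma k k1 hk (agen i j h) = agen i j h := by
  rw [phiSigma_agen, phiSigmaAux]; simp [agen, hi, hi1, hj, hj1]

lemma i1 : phiSigmaInv k k1 hk (agen k k1 hk) = -agen k1 k hk.symm := by
  rw [phiSigmaInv_agen, phiSigmaInvAux]; simp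

lemma i2 : phiSigmaInv k k1 hk (agen k1 k hk.symm) = -agen k k1 hk := by
  rw [phiSigmaInv_agen, phiSigmaInvAux]; simp [hk]

lemma i3 (j : Fin n) (hj : j ≠ k) (hj1 : j ≠ k1) :
    phiSigmaInv k k1 hk (agen k j hj.symm) = agen k1 j hj1.symm := by
  rw [phiSigmaInv_agen, phiSigmaInvAux]; simp [hk, hk.symm, hj, hj1]

lemma i4 (i : Fin n) (hi : i ≠ k) (hi1 : i ≠ k1) :
    phiSigmaInv k k1 hk (agen i k hi) = agen i k1 hi1 := by
  rw [phiSigmaInv_agen, phiSigmaInvAux]; simp [hk, hk.symm, hi, hi1]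

lemma i5 (j : Fin n) (hj : j ≠ k) (hj1 : j ≠ k1) :
    phiSigmaInv k k1 hk (agen k1 j hj1.symm) =
      agen k j hj.symm - agen k k1 hk * agen k1 j hj1.symm := by
  rw [phiSigmaInv_agen, phiSigmaInvAux]; simp [hk, hk.symm, hj, hj1]

lemma i6 (i : Fin n) (hi : i ≠ k) (hi1 : i ≠ k1) :
    phiSigmaInv k k1 hk (agen i k1 hi1) =
      agen i k hi - agen i k1 hi1 * agen k1 k hk.symm := by
  rw [phiSigmaInv_agen, phiSigmaInvAux]; simp [hk, hk.symm, hi, hi1]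

lemma i7 (i j : Fin n) (h : i ≠ j) (hi : i ≠ k) (hi1 : i ≠ k1) (hj : j ≠ k) (hj1 : j ≠ k1) :
    phiSigmaInv k k1 hk (agen i j h) = agen i j h := by
  rw [phiSigmaInv_agen, phiSigmaInvAux]; simp [agen, hi, hi1, hj, hj1]

end eval

lemma sigma_comp_inv {n : ℕ} (k k1 : Fin n) (hk : k ≠ k1) :
    (phiSigma k k1 hk).comp (phiSigmaInv k k1 hk) = AlgHom.id ℤ (BraidAlg n) := by
  apply FreeAlgebra.hom_ext
  funext p
  obtain ⟨⟨i, j⟩, hij⟩ := p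
  show phiSigma k k1 hk (phiSigmaInv k k1 hk (agen i j hij)) = agen i j hij
  by_cases hik : i = k <;> by_cases hik1 : i = k1 <;>
    by_cases hjk : j = k <;> by_cases hjk1 : j = k1 <;>
    first
    | (exfalso; subst_vars; first | exact hk rfl | exact hij rfl)
    | skip
  · -- i = k, j = k1
    subst i; subst j
    rw [i1, map_neg, s2, neg_neg]
  · -- i = k, j generic
    subst i
    rw [i3 k k1 hk j (Ne.symm hij) hjk1, s5 k k1 hk j (Ne.symm hij) hjk1]
  · -- i = k1, j = k
    subst i; subst j
    rw [i2, map_neg, s1, neg_neg]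
  · -- i = k1, j generic
    subst i
    rw [i5 k k1 hk j hjk hjk1, map_sub, map_mul,
      s3 k k1 hk j hjk hjk1, s1, s5 k k1 hk j hjk hjk1]
    noncomm_ring
  · -- j = k, i generic
    subst j
    rw [i4 k k1 hk i hik hik1, s6 k k1 hk i hik hik1]
  · -- j = k1, i generic
    subst j
    rw [i6 k k1 hk i hik hik1, map_sub, map_mul,
      s4 k k1 hk i hik hik1, s6 k k1 hk i hik hik1, s2]
    noncomm_ring
  · rw [i7 k k1 hk i j hij hik hik1 hjk hjk1, s7 k k1 hk i j hij hik hik1 hjk hjk1]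

lemma sigma_inv_comp {n : ℕ} (k k1 : Fin n) (hk : k ≠ k1) :
    (phiSigmaInv k k1 hk).comp (phiSigma k k1 hk) = AlgHom.id ℤ (BraidAlg n) := by
  apply FreeAlgebra.hom_ext
  funext p
  obtain ⟨⟨i, j⟩, hij⟩ := p
  show phiSigmaInv k k1 hk (phiSigma k k1 hk (agen i j hij)) = agen i j hij
  by_cases hik : i = k <;> by_cases hik1 : i = k1 <;>
    by_cases hjk : j = k <;> by_cases hjk1 : j = k1 <;>
    first
    | (exfalso; subst_vars; first | exact hk rfl | exact hij rfl)
    | skip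
  · subst i; subst j
    rw [s1, map_neg, i2, neg_neg]
  · subst i
    rw [s3 k k1 hk j (Ne.symm hij) hjk1, map_sub, map_mul,
      i5 k k1 hk j (Ne.symm hij) hjk1, i2, i3 k k1 hk j (Ne.symm hij) hjk1]
    noncomm_ring
  · subst i; subst j
    rw [s2, map_neg, i1, neg_neg]
  · subst i
    rw [s5 k k1 hk j hjk hjk1, i3 k k1 hk j hjk hjk1]
  · subst j
    rw [s4 k k1 hk i hik hik1, map_sub, map_mul,
      i6 k k1 hk i hik hik1, i4 k k1 hk i hik hik1, i1]
    noncomm_ring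
  · subst j
    rw [s6 k k1 hk i hik hik1, i4 k k1 hk i hik hik1]
  · rw [s7 k k1 hk i j hij hik hik1 hjk hjk1, i7 k k1 hk i j hij hik hik1 hjk hjk1]

lemma phiWord_nil {n : ℕ} : phiWord ([] : List (Fin n × Bool)) = AlgHom.id ℤ _ := rfl

lemma phiWord_cons {n : ℕ} (g : Fin n × Bool) (t : List (Fin n × Bool)) :
    phiWord (g :: t) = (phiLetter g).comp (phiWord t) := rfl

lemma phiWord_append {n : ℕ} (w w' : List (Fin n × Bool)) :
    phiWord (w ++ w') = (phiWord w).comp (phiWord w') := by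
  induction w with
  | nil => simp [phiWord, AlgHom.id_comp]
  | cons g t ih => simp [phiWord, ih, AlgHom.comp_assoc]

lemma phiLetter_comp_inv {n : ℕ} (g : Fin n × Bool) :
    (phiLetter g).comp (phiLetter (g.1, !g.2)) = AlgHom.id ℤ (BraidAlg (n + 2)) := by
  obtain ⟨k, s⟩ := g
  cases s <;> simp [phiLetter, sigma_comp_inv, sigma_inv_comp]

lemma phiLetter_inv_comp {n : ℕ} (g : Fin n × Bool) :
    (phiLetter (g.1, !g.2)).comp (phiLetter g) = AlgHom.id ℤ (BraidAlg (n + 2)) := by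
  obtain ⟨k, s⟩ := g
  cases s <;> simp [phiLetter, sigma_comp_inv, sigma_inv_comp]

lemma phiWord_comp_inv {n : ℕ} (w : List (Fin n × Bool)) :
    (phiWord w).comp (phiWord (wordInv w)) = AlgHom.id ℤ (BraidAlg (n + 2)) := by
  induction w with
  | nil => simp [phiWord, wordInv, AlgHom.id_comp]
  | cons g t ih =>
      have h1 : wordInv (g :: t) = wordInv t ++ [(g.1, !g.2)] := by
        simp [wordInv]
      have h2 : phiWord [(g.1, !g.2)] = phiLetter (g.1, !g.2) := by
        rw [phiWord_cons, phiWord_nil, AlgHom.comp_id]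
      rw [h1, phiWord_append, h2, phiWord_cons, AlgHom.comp_assoc,
        ← AlgHom.comp_assoc (phiWord t), ih, AlgHom.id_comp, phiLetter_comp_inv]

lemma phiWord_inv_comp {n : ℕ} (w : List (Fin n × Bool)) :
    (phiWord (wordInv w)).comp (phiWord w) = AlgHom.id ℤ (BraidAlg (n + 2)) := by
  induction w with
  | nil => simp [phiWord, wordInv, AlgHom.id_comp]
  | cons g t ih =>
      have h1 : wordInv (g :: t) = wordInv t ++ [(g.1, !g.2)] := by
        simp [wordInv]
      have h2 : phiWord [(g.1, !g.2)] = phiLetter (g.1, !g.2) := by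
        rw [phiWord_cons, phiWord_nil, AlgHom.comp_id]
      rw [h1, phiWord_append, h2, phiWord_cons, AlgHom.comp_assoc,
        ← AlgHom.comp_assoc (phiLetter (g.1, !g.2)),
        phiLetter_inv_comp, AlgHom.id_comp, ih]

/-- The generator index of `aL j`. -/
def xL {n : ℕ} (j : Fin (n + 1)) : BraidAlgGen (n + 2) :=
  ⟨(j.castSucc, Fin.last (n + 1)), (Fin.castSucc_lt_last j).ne⟩

/-- The generator index of `aR j`. -/
def xR {n : ℕ} (j : Fin (n + 1)) : BraidAlgGen (n + 2) :=
  ⟨(Fin.last (n + 1), j.castSucc), (Fin.castSucc_lt_last j).ne'⟩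

lemma xL_inj {n : ℕ} : Function.Injective (xL (n := n)) := by
  intro a b h
  simpa [xL, Fin.castSucc_inj] using congrArg (fun p => p.1.1) h

lemma xR_inj {n : ℕ} : Function.Injective (xR (n := n)) := by
  intro a b h
  simpa [xR, Fin.castSucc_inj] using congrArg (fun p => p.1.2) h

lemma aL_eq {n : ℕ} (j : Fin (n + 1)) : aL j = FreeAlgebra.ι ℤ (xL j) := rfl
lemma aR_eq {n : ℕ} (j : Fin (n + 1)) : aR j = FreeAlgebra.ι ℤ (xR j) := rfl

lemma isPhiL_unique {n : ℕ} {w : List (Fin n × Bool)} {L L' :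
    Matrix (Fin (n + 1)) (Fin (n + 1)) (BraidAlg (n + 2))}
    (h : IsPhiL w L) (h' : IsPhiL w L') : L = L' := by
  funext i
  refine coeff_unique_left xL xL_inj (L i) (L' i) ?_
  simp only [← aL_eq]
  rw [← h i, ← h' i]

lemma isPhiR_unique {n : ℕ} {w : List (Fin n × Bool)} {R R' :
    Matrix (Fin (n + 1)) (Fin (n + 1)) (BraidAlg (n + 2))}
    (h : IsPhiR w R) (h' : IsPhiR w R') : R = R' := by
  have : ∀ i, (fun j => R j i) = (fun j => R' j i) := by
    intro i
    refine coeff_unique_right xR xR_inj _ _ ?_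
    simp only [← aR_eq]
    rw [← h i, ← h' i]
  funext j i
  exact congrFun (this i) j

lemma isPhiL_comp {n : ℕ} {w w' : List (Fin n × Bool)} {L L' :
    Matrix (Fin (n + 1)) (Fin (n + 1)) (BraidAlg (n + 2))}
    (h : IsPhiL w L) (h' : IsPhiL w' L') :
    IsPhiL (w ++ w') ((L'.map (phiWord w)) * L) := by
  intro i
  have h2 : ∀ i, phiWord w (aL i) = ∑ j, L i j * aL j := h
  rw [phiWord_append]
  show phiWord w (phiWord w' (aL i)) = _
  rw [h' i, map_sum]
  simp only [map_mul, h2, Finset.mul_sum, ← mul_assoc]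
  rw [Finset.sum_comm]
  simp only [Matrix.mul_apply, Matrix.map_apply, Finset.sum_mul]

lemma isPhiR_comp {n : ℕ} {w w' : List (Fin n × Bool)} {R R' :
    Matrix (Fin (n + 1)) (Fin (n + 1)) (BraidAlg (n + 2))}
    (h : IsPhiR w R) (h' : IsPhiR w' R') :
    IsPhiR (w ++ w') (R * (R'.map (phiWord w))) := by
  intro i
  have h2 : ∀ i, phiWord w (aR i) = ∑ j, aR j * R j i := h
  rw [phiWord_append]
  show phiWord w (phiWord w' (aR i)) = _
  rw [h' i, map_sum]
  simp only [map_mul, h2, Finset.sum_mul, mul_assoc]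
  rw [Finset.sum_comm]
  simp only [Matrix.mul_apply, Matrix.map_apply, Finset.mul_sum]

lemma isPhiL_of_id {n : ℕ} {w : List (Fin n × Bool)}
    (h : phiWord w = AlgHom.id ℤ (BraidAlg (n + 2))) : IsPhiL w 1 := by
  intro i
  rw [h]
  simp [Matrix.one_apply, ite_mul]

lemma isPhiR_of_id {n : ℕ} {w : List (Fin n × Bool)}
    (h : phiWord w = AlgHom.id ℤ (BraidAlg (n + 2))) : IsPhiR w 1 := by
  intro i
  rw [h]
  simp [Matrix.one_apply, mul_ite]

lemma map_comp_id {n : ℕ} (w : List (Fin n × Bool))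
    (X : Matrix (Fin (n + 1)) (Fin (n + 1)) (BraidAlg (n + 2))) :
    (X.map (phiWord (wordInv w))).map (phiWord w) = X := by
  rw [Matrix.map_map]
  have : ⇑(phiWord w) ∘ ⇑(phiWord (wordInv w)) = id := by
    have := phiWord_comp_inv w
    funext x
    exact congrArg (fun f => f x) (congrArg (DFunLike.coe) this)
  rw [this, Matrix.map_id]

/-- the Chain Rule `Φ_{BB'}^L = φ_B(Φ_{B'}^L)·Φ_B^L` and
`Φ_{BB'}^R = Φ_B^R·φ_B(Φ_{B'}^R)`; consequently `φ_B(Φ_{B⁻¹}^L)` is a two-sided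
inverse of `Φ_B^L` and `φ_B(Φ_{B⁻¹}^R)` is a two-sided inverse of `Φ_B^R`. -/
theorem chain_rule_and_inverses {n : ℕ} :
    (∀ (w w' : List (Fin n × Bool)) L L' L'',
      IsPhiL w L → IsPhiL w' L' → IsPhiL (w ++ w') L'' →
        L'' = (L'.map (phiWord w)) * L) ∧
    (∀ (w w' : List (Fin n × Bool)) R R' R'',
      IsPhiR w R → IsPhiR w' R' → IsPhiR (w ++ w') R'' →
        R'' = R * (R'.map (phiWord w))) ∧
    (∀ (w : List (Fin n × Bool)) L M,
      IsPhiL w L → IsPhiL (wordInv w) M →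
        (M.map (phiWord w)) * L = 1 ∧ L * (M.map (phiWord w)) = 1) ∧
    (∀ (w : List (Fin n × Bool)) R M,
      IsPhiR w R → IsPhiR (wordInv w) M →
        R * (M.map (phiWord w)) = 1 ∧ (M.map (phiWord w)) * R = 1) := by
  refine ⟨?_, ?_, ?_, ?_⟩
  · intro w w' L L' L'' h h' h''
    exact isPhiL_unique h'' (isPhiL_comp h h')
  · intro w w' R R' R'' h h' h''
    exact isPhiR_unique h'' (isPhiR_comp h h')
  · intro w L M h hM
    have h1 : (M.map (phiWord w)) * L = 1 :=
      isPhiL_unique (isPhiL_comp h hM) (isPhiL_of_id (by rw [phiWord_append]; exact phiWord_comp_inv w))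
    have h2 : (L.map (phiWord (wordInv w))) * M = 1 :=
      isPhiL_unique (isPhiL_comp hM
        (by simpa using h)) (isPhiL_of_id (by rw [phiWord_append]; exact phiWord_inv_comp w))
    refine ⟨h1, ?_⟩
    have h3 := congrArg (RingHom.mapMatrix (m := Fin (n+1)) (phiWord w).toRingHom) h2
    simp only [map_mul, map_one, RingHom.mapMatrix_apply, AlgHom.toRingHom_eq_coe, AlgHom.coe_toRingHom] at h3
    rwa [map_comp_id] at h3
  · intro w R M h hM
    have h1 : R * (M.map (phiWord w)) = 1 :=
      isPhiR_unique (isPhiR_comp h hM) (isPhiR_of_id (by rw [phiWord_append]; exact phiWord_comp_inv w))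
    have h2 : M * (R.map (phiWord (wordInv w))) = 1 :=
      isPhiR_unique (isPhiR_comp hM
        (by simpa using h)) (isPhiR_of_id (by rw [phiWord_append]; exact phiWord_inv_comp w))
    refine ⟨h1, ?_⟩
    have h3 := congrArg (RingHom.mapMatrix (m := Fin (n+1)) (phiWord w).toRingHom) h2
    simp only [map_mul, map_one, RingHom.mapMatrix_apply, AlgHom.toRingHom_eq_coe, AlgHom.coe_toRingHom] at h3
    rwa [map_comp_id] at h3
end

section
/- Define the sequence of polynomials P_k over C by P_0 = 1, P_1(x) = −x, P_{k+1}(x) = P_{k−1}(x) − x P_k(−x). For every v ≥ 3 there exists X_0 ∈ C such that P_{v−2}(X_0) = 0 and P_{v−1}(X_0) = (−1)^{v−1}; for such X_0 one additionally has (−1)^v P_v(X_0) = (−1)^{v−1} X_0. -/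
open Polynomial

noncomputable def cornwellPC : ℕ → Polynomial ℂ
  | 0 => 1
  | 1 => -X
  | (k + 2) => cornwellPC k - X * (cornwellPC (k + 1)).comp (-X)

lemma cornwellPC_eval_rec (k : ℕ) (x : ℂ) :
    (cornwellPC (k + 2)).eval x
      = (cornwellPC k).eval x - x * (cornwellPC (k + 1)).eval (-x) := by
  simp [cornwellPC, eval_comp]

lemma cornwellPC_eval_neg : ∀ k : ℕ, ∀ x : ℂ,
    (cornwellPC k).eval (-x) = (-1) ^ k * (cornwellPC k).eval x := by
  intro k
  induction k using Nat.strong_induction_on with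
  | _ k ih =>
    match k with
    | 0 => intro x; simp [cornwellPC]
    | 1 => intro x; simp [cornwellPC]
    | (n + 2) =>
      intro x
      rw [cornwellPC_eval_rec, cornwellPC_eval_rec, neg_neg,
        ih n (by omega) x, ih (n+1) (by omega) x]
      rcases Nat.even_or_odd n with h | h
      · rw [h.neg_one_pow, (by simpa [Nat.even_add] using h : Even (n+2)).neg_one_pow,
          (by simpa [Nat.odd_add] using h : Odd (n+1)).neg_one_pow]
        ring
      · rw [h.neg_one_pow, (by simpa [Nat.odd_add] using h : Odd (n+2)).neg_one_pow,
          (by simpa [Nat.even_add] using h : Even (n+1)).neg_one_pow]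
        ring

lemma cornwellPC_eval_rec' (k : ℕ) (x : ℂ) :
    (cornwellPC (k + 2)).eval x
      = (cornwellPC k).eval x - (-1) ^ (k+1) * x * (cornwellPC (k + 1)).eval x := by
  rw [cornwellPC_eval_rec, cornwellPC_eval_neg]; ring

lemma cornwellPC_det (n : ℕ) (x : ℂ) :
    (cornwellPC (n+2)).eval x * (cornwellPC n).eval x
      + ((cornwellPC (n+1)).eval x) ^ 2 = 1 := by
  induction n with
  | zero =>
    rw [cornwellPC_eval_rec]
    simp [cornwellPC]
    ring
  | succ m ih =>
    simp only [show m+1+2 = m+1+2 from rfl, show m+1+1 = m+2 from rfl]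
    rw [show m+1+2 = (m+1)+2 from rfl, cornwellPC_eval_rec' (m+1) x]
    rw [cornwellPC_eval_rec' m x] at *
    rcases Nat.even_or_odd m with h | h
    · rw [(by simpa [Nat.even_add] using h : Even (m+2)).neg_one_pow,
        (by simpa [Nat.odd_add] using h : Odd (m+1)).neg_one_pow] at *
      linear_combination ih
    · rw [(by simpa [Nat.odd_add] using h : Odd (m+2)).neg_one_pow,
        (by simpa [Nat.even_add] using h : Even (m+1)).neg_one_pow] at *
      linear_combination ih

lemma cornwellPC_degree : ∀ k : ℕ, (cornwellPC k).degree = k := by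
  intro k
  induction k using Nat.strong_induction_on with
  | _ k ih =>
    match k with
    | 0 => simp [cornwellPC]
    | 1 => simp [cornwellPC]
    | (n + 2) =>
      have hcomp : (cornwellPC (n+1)).comp (-X) = (-1)^(n+1) * cornwellPC (n+1) := by
        apply Polynomial.funext
        intro x
        simp [eval_comp, cornwellPC_eval_neg]
      have h1 : (X * ((cornwellPC (n+1)).comp (-X))).degree = ((n + 2 : ℕ) : WithBot ℕ) := by
        rw [hcomp, show (X : ℂ[X]) * ((-1)^(n+1) * cornwellPC (n+1))
            = (-1)^(n+1) * (X * cornwellPC (n+1)) by ring]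
        have hu : ((-1 : ℂ[X]) ^ (n+1)).degree = 0 := by
          rcases Nat.even_or_odd (n+1) with h | h
          · rw [h.neg_one_pow]; exact degree_one
          · rw [h.neg_one_pow, degree_neg]; exact degree_one
        rw [degree_mul, degree_mul, degree_X, ih (n+1) (by omega), hu, zero_add]
        exact_mod_cast (by omega : 1 + (n+1) = n + 2)
      show (cornwellPC n - X * (cornwellPC (n+1)).comp (-X)).degree = ((n + 2 : ℕ) : WithBot ℕ)
      rw [degree_sub_eq_right_of_degree_lt, h1]
      rw [h1, ih n (by omega)]
      exact_mod_cast (by omega : n < n + 2)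

lemma cornwellPC_eval_zero : ∀ k : ℕ, (cornwellPC k).eval 0 = if Even k then 1 else 0 := by
  intro k
  induction k using Nat.strong_induction_on with
  | _ k ih =>
    match k with
    | 0 => simp [cornwellPC]
    | 1 => simp [cornwellPC]
    | (n + 2) =>
      rw [cornwellPC_eval_rec]
      simp [ih n (by omega), Nat.even_add]

/-- for every `v ≥ 3` there is `X₀ ∈ ℂ` with `P_{v-2}(X₀) = 0` and
`P_{v-1}(X₀) = (-1)^{v-1}`; for such `X₀` one additionally has
`(-1)^v · P_v(X₀) = (-1)^{v-1} · X₀`. -/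
theorem cornwellPC_exists_good_root (v : ℕ) (hv : 3 ≤ v) :
    ∃ X₀ : ℂ, (cornwellPC (v - 2)).eval X₀ = 0 ∧
      (cornwellPC (v - 1)).eval X₀ = (-1) ^ (v - 1) ∧
      (-1) ^ v * (cornwellPC v).eval X₀ = (-1) ^ (v - 1) * X₀ := by
  obtain ⟨w, rfl⟩ : ∃ w, v = w + 3 := ⟨v - 3, by omega⟩
  have h2 : w + 3 - 2 = w + 1 := rfl
  have h1 : w + 3 - 1 = w + 2 := rfl
  rw [h2, h1]
  suffices h : ∃ X₀ : ℂ, (cornwellPC (w+1)).eval X₀ = 0 ∧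
      (cornwellPC (w+2)).eval X₀ = (-1) ^ (w+2) by
    obtain ⟨X₀, hr, hval⟩ := h
    refine ⟨X₀, hr, hval, ?_⟩
    rw [show w + 3 = (w+1)+2 from rfl, cornwellPC_eval_rec' (w+1), hval, hr]
    simp only [show ((-1:ℂ))^(w+1+1) = (-1)^(w+2) from rfl,
      show ((-1:ℂ))^(w+1+2) = (-1)^(w+3) from rfl,
      show ((-1:ℂ))^(w+3) = (-1)^(w+2) * (-1) from pow_succ _ _]
    have ht : ((-1:ℂ))^(w+2) * (-1)^(w+2) = 1 := by
      rw [← pow_add]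
      exact Even.neg_one_pow ⟨w+2, by ring⟩
    linear_combination ((-1:ℂ)^(w+2) * X₀) * ht
  rcases Nat.even_or_odd w with hw | hw
  · -- w even: w+1 odd, X₀ = 0 works
    refine ⟨0, ?_, ?_⟩
    · rw [cornwellPC_eval_zero, if_neg (by simp [Nat.even_add_one, hw])]
    · rw [cornwellPC_eval_zero, if_pos (by simpa [Nat.even_add] using hw),
        Even.neg_one_pow (by simpa [Nat.even_add] using hw)]
  · -- w odd: use a root of cornwellPC (w+1)
    have hd : 0 < (cornwellPC (w+1)).degree := by
      rw [cornwellPC_degree]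
      exact_mod_cast (by omega : 0 < w + 1)
    obtain ⟨X₀, hX₀⟩ := Complex.exists_root hd
    have hroot : (cornwellPC (w+1)).eval X₀ = 0 := hX₀
    have hdet := cornwellPC_det (w+1) X₀
    rw [hroot] at hdet
    have hsq : ((cornwellPC (w+1+1)).eval X₀) ^ 2 = 1 := by simpa using hdet
    have hcases : (cornwellPC (w+2)).eval X₀ = 1 ∨ (cornwellPC (w+2)).eval X₀ = -1 := by
      have h0 : ((cornwellPC (w+2)).eval X₀ - 1) * ((cornwellPC (w+2)).eval X₀ + 1) = 0 := by
        linear_combination hsq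
      rcases mul_eq_zero.mp h0 with h | h
      · left; linear_combination h
      · right; linear_combination h
    have hpow : ((-1 : ℂ)) ^ (w + 2) = -1 :=
      Odd.neg_one_pow (by simpa [Nat.odd_add] using hw)
    rcases hcases with h | h
    · refine ⟨-X₀, ?_, ?_⟩
      · rw [cornwellPC_eval_neg, hroot, mul_zero]
      · rw [cornwellPC_eval_neg, h, mul_one]
    · exact ⟨X₀, hroot, by rw [h, hpow]⟩
end
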